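/- Let f : ℝ^d → ℝ be continuously differentiable with partial derivatives f_(1),…,f_(d). Then f preserves the unordered weak majorization order ≼ (where u ≼ v iff all initial partial sums of u are dominated by those of v) if and only if for every z ∈ ℝ^d, f_(1)(z) ≥ f_(2)(z) ≥ … ≥ f_(d)(z) ≥ 0. -/

import Mathlib

/-!
Since `u ≼ v` iff `0 ≼ v - u`, the order is a translate of the convex cone `C = {w | 0 ≼ w}`.
If `f` is order preserving, every `z` minimises `f` on `z + C`, so `Df(z) ≥ 0` on `C`; the
conditions on the partial derivatives are this inequality at `eᵢ ∈ C` and at `eᵢ - eⱼ ∈ C`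
for `i ≤ j`. Conversely, if the weights `f_(i)(z)` are nonnegative and decreasing, Abel
summation shows that `Df(z) w = ∑ f_(i)(z) wᵢ ≥ 0` for `w ∈ C`, and the mean value theorem on
the segment `[u, v]` gives `f u ≤ f v`.
-/

/-- The unordered weak majorization relation on `ℝ^d`. -/
def weakMajorizes {d : ℕ} (u v : EuclideanSpace ℝ (Fin d)) : Prop :=
  ∀ i : Fin d, ∑ k ∈ Finset.Iic i, u k ≤ ∑ k ∈ Finset.Iic i, v k

open Finset

theorem Finset.sum_mul_nonneg_of_antitoneOn {ι R : Type*} [LinearOrder ι] [CommRing R]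
    [LinearOrder R] [IsStrictOrderedRing R] (s : Finset ι) {a w : ι → R}
    (ha : AntitoneOn a s) (ha₀ : ∀ i ∈ s, 0 ≤ a i)
    (hw : ∀ i ∈ s, 0 ≤ ∑ k ∈ s with k ≤ i, w k) :
    0 ≤ ∑ i ∈ s, a i * w i := by
  induction s using Finset.induction_on_max generalizing a with
  | empty => simp
  | insert m s hlt ih =>
    have hm : m ∉ s := fun h => (hlt m h).false
    -- Abel summation: peel off the smallest weight `a m` from every term.
    have hsplit : ∑ i ∈ insert m s, a i * w i
        = ∑ i ∈ s, (a i - a m) * w i + a m * ∑ i ∈ insert m s, w i := by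
      simp only [sum_insert hm, sub_mul, sum_sub_distrib, mul_add, mul_sum]
      ring
    have htail : 0 ≤ ∑ i ∈ s, (a i - a m) * w i := by
      refine ih (fun i hi j hj hij => ?_) (fun i hi => ?_) fun i hi => ?_
      · exact sub_le_sub_right (ha (mem_insert_of_mem hi) (mem_insert_of_mem hj) hij) _
      · exact sub_nonneg.2 (ha (mem_insert_of_mem hi) (mem_insert_self m s) (hlt i hi).le)
      · have := hw i (mem_insert_of_mem hi)
        rwa [filter_insert, if_neg (hlt i hi).not_ge] at this
    have htotal : 0 ≤ ∑ i ∈ insert m s, w i := by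
      have := hw m (mem_insert_self m s)
      rwa [filter_true_of_mem fun k hk => ?_] at this
      rcases mem_insert.1 hk with rfl | hk
      exacts [le_rfl, (hlt k hk).le]
    rw [hsplit]
    exact add_nonneg htail (mul_nonneg (ha₀ m (mem_insert_self m s)) htotal)

section

variable {d : ℕ}

theorem weakMajorizes_iff_zero_sub {u v : EuclideanSpace ℝ (Fin d)} :
    weakMajorizes u v ↔ weakMajorizes 0 (v - u) := by
  simp [weakMajorizes, sum_sub_distrib]

theorem weakMajorizes_zero_single (i : Fin d) :
    weakMajorizes 0 (EuclideanSpace.single i 1) := by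
  intro k
  simp only [PiLp.zero_apply, sum_const_zero, PiLp.single_apply, sum_ite_eq', mem_Iic]
  exact ite_nonneg zero_le_one le_rfl

theorem weakMajorizes_zero_single_sub_single {i j : Fin d} (hij : i ≤ j) :
    weakMajorizes 0 (EuclideanSpace.single i 1 - EuclideanSpace.single j 1) := by
  intro k
  simp only [PiLp.zero_apply, sum_const_zero, PiLp.sub_apply, PiLp.single_apply, sum_sub_distrib,
    sum_ite_eq', mem_Iic, sub_nonneg]
  split_ifs with hj hi <;> norm_num
  exact hi (hij.trans hj)

theorem convex_setOf_weakMajorizes (u : EuclideanSpace ℝ (Fin d)) :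
    Convex ℝ {v | weakMajorizes u v} := by
  intro x hx y hy a b ha hb hab i
  simp only [PiLp.add_apply, PiLp.smul_apply, smul_eq_mul, sum_add_distrib, ← mul_sum]
  calc ∑ k ∈ Iic i, u k = a * ∑ k ∈ Iic i, u k + b * ∑ k ∈ Iic i, u k := by
        rw [← add_mul, hab, one_mul]
    _ ≤ _ := add_le_add (mul_le_mul_of_nonneg_left (hx i) ha)
        (mul_le_mul_of_nonneg_left (hy i) hb)

theorem EuclideanSpace.clm_apply_eq_sum (D : EuclideanSpace ℝ (Fin d) →L[ℝ] ℝ)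
    (w : EuclideanSpace ℝ (Fin d)) :
    D w = ∑ i, D (EuclideanSpace.single i 1) * w i := by
  conv_lhs => rw [← (EuclideanSpace.basisFun (Fin d) ℝ).sum_repr w]
  simp [mul_comm]

theorem fderiv_nonneg_of_monotone_weakMajorizes {f : EuclideanSpace ℝ (Fin d) → ℝ}
    (hf : Differentiable ℝ f) (H : ∀ u v, weakMajorizes u v → f u ≤ f v)
    (z : EuclideanSpace ℝ (Fin d)) {w : EuclideanSpace ℝ (Fin d)} (hw : weakMajorizes 0 w) :
    0 ≤ fderiv ℝ f z w := by
  have hmin : IsMinOn f {v | weakMajorizes z v} z := fun v hv => H z v hv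
  have hseg : segment ℝ z (z + w) ⊆ {v | weakMajorizes z v} :=
    (convex_setOf_weakMajorizes z).segment_subset (fun i => le_rfl)
      (weakMajorizes_iff_zero_sub.2 (by simpa using hw))
  exact hmin.localize.hasFDerivWithinAt_nonneg (hf z).hasFDerivAt.hasFDerivWithinAt
    (mem_posTangentConeAt_of_segment_subset hseg)

theorem ContinuousLinearMap.apply_nonneg_of_weakMajorizes_zero
    (D : EuclideanSpace ℝ (Fin d) →L[ℝ] ℝ)
    (hD : ∀ i j : Fin d, i ≤ j → D (EuclideanSpace.single j 1) ≤ D (EuclideanSpace.single i 1))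
    (hD₀ : ∀ i, 0 ≤ D (EuclideanSpace.single i 1)) {w : EuclideanSpace ℝ (Fin d)}
    (hw : weakMajorizes 0 w) : 0 ≤ D w := by
  rw [EuclideanSpace.clm_apply_eq_sum]
  refine univ.sum_mul_nonneg_of_antitoneOn (fun i _ j _ hij => hD i j hij) (fun i _ => hD₀ i)
    fun i _ => ?_
  simpa [filter_ge_eq_Iic] using hw i

end

/-- A continuously differentiable `f : ℝ^d → ℝ` preserves the unordered weak majorization
order iff its partial derivatives satisfy `f_(1)(z) ≥ f_(2)(z) ≥ … ≥ f_(d)(z) ≥ 0` at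
every point `z`. -/
theorem orderPreserving_iff_partialDerivs {d : ℕ}
    (f : EuclideanSpace ℝ (Fin d) → ℝ) (hf : ContDiff ℝ 1 f) :
    (∀ u v : EuclideanSpace ℝ (Fin d), weakMajorizes u v → f u ≤ f v) ↔
      (∀ z : EuclideanSpace ℝ (Fin d),
        (∀ i j : Fin d, i ≤ j →
          fderiv ℝ f z (EuclideanSpace.single j 1) ≤ fderiv ℝ f z (EuclideanSpace.single i 1)) ∧
        ∀ i : Fin d, 0 ≤ fderiv ℝ f z (EuclideanSpace.single i 1)) := by
  have hdiff : Differentiable ℝ f := hf.differentiable one_ne_zero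
  constructor
  · intro H z
    refine ⟨fun i j hij => ?_, fun i => ?_⟩
    · have := fderiv_nonneg_of_monotone_weakMajorizes hdiff H z
        (weakMajorizes_zero_single_sub_single hij)
      rwa [map_sub, sub_nonneg] at this
    · exact fderiv_nonneg_of_monotone_weakMajorizes hdiff H z (weakMajorizes_zero_single i)
  · intro hD u v huv
    obtain ⟨ξ, -, hmvt⟩ := domain_mvt (fun x _ => (hdiff x).hasFDerivAt.hasFDerivWithinAt)
      convex_univ (Set.mem_univ u) (Set.mem_univ v)
    have := ContinuousLinearMap.apply_nonneg_of_weakMajorizes_zero _ (hD ξ).1 (hD ξ).2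
      (weakMajorizes_iff_zero_sub.1 huv)
    linarith
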